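/- Given |G| ≥ |P_f(Q) × {0,1}| (P_f(Q) the finite subsets of Q) and F = ⋃_{n≥0} G^{G^n} (the full function domain), the system SLKVF + EXT is sound and complete for LKVF: a formula is provable in SLKVF + EXT if and only if it is true at every world of every model over (G,F). -/

import Mathlib

open scoped Classical

/-! Single-agent language `LKVF` with operators `Kv`, `Kf` and `K`. -/

inductive Formula (P Q : Type) : Type where
  | top : Formula P Q
  | atom : P → Formula P Q
  | Kv : Q → Formula P Q
  | Kf : Finset Q → Q → Formula P Q
  | and : Formula P Q → Formula P Q → Formula P Q
  | not : Formula P Q → Formula P Q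
  | K : Formula P Q → Formula P Q

namespace Formula

variable {P Q : Type}

/-- Material implication, defined from `and` and `not`. -/
def imp (φ ψ : Formula P Q) : Formula P Q := Formula.not (Formula.and φ (Formula.not ψ))

/-- Falsum. -/
def bot : Formula P Q := Formula.not Formula.top

/-- Disjunction. -/
def or (φ ψ : Formula P Q) : Formula P Q :=
  Formula.not (Formula.and (Formula.not φ) (Formula.not ψ))

end Formula

variable {P Q G : Type}

/-- Finite conjunction of a list of formulas. -/
def conj : List (Formula P Q) → Formula P Q
  | [] => Formula.top
  | φ :: l => Formula.and φ (conj l)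

/-- Finite disjunction of a list of formulas. -/
def disj : List (Formula P Q) → Formula P Q
  | [] => Formula.bot
  | φ :: l => Formula.or φ (disj l)

/-- `φ` is a propositional tautology: every Boolean valuation commuting with the
Boolean connectives makes it true. -/
def IsTaut (φ : Formula P Q) : Prop :=
  ∀ v : Formula P Q → Bool,
    v Formula.top = true →
    (∀ α β, v (Formula.and α β) = (v α && v β)) →
    (∀ α, v (Formula.not α) = (! v α)) →
    v φ = true

section Axioms

variable (P Q : Type) [LinearOrder Q]

/-- `⋀_{d ∈ D} Kf(C,d)`. -/
def finConjKf (C D : Finset Q) : Formula P Q :=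
  conj ((D.sort (· ≤ ·)).map fun d => Formula.Kf C d)

/-- `⋀_{c ∈ C} Kv(c)`. -/
def finConjKv (C : Finset Q) : Formula P Q :=
  conj ((C.sort (· ≤ ·)).map fun c => Formula.Kv c)

/-- The axioms of the base system `SLKVF`. -/
inductive SLKVF : Formula P Q → Prop where
  | taut {φ : Formula P Q} : IsTaut φ → SLKVF φ
  | axK (φ ψ : Formula P Q) :
      SLKVF (Formula.imp (Formula.K (Formula.imp φ ψ))
        (Formula.imp (Formula.K φ) (Formula.K ψ)))
  | axT (φ : Formula P Q) : SLKVF (Formula.imp (Formula.K φ) φ)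
  | ax4 (φ : Formula P Q) : SLKVF (Formula.imp (Formula.K φ) (Formula.K (Formula.K φ)))
  | ax5 (φ : Formula P Q) :
      SLKVF (Formula.imp (Formula.not (Formula.K φ)) (Formula.K (Formula.not (Formula.K φ))))
  | kv4 (d : Q) : SLKVF (Formula.imp (Formula.Kv d) (Formula.K (Formula.Kv d)))
  | kv5 (d : Q) :
      SLKVF (Formula.imp (Formula.not (Formula.Kv d)) (Formula.K (Formula.not (Formula.Kv d))))
  | kf4 (C : Finset Q) (d : Q) :
      SLKVF (Formula.imp (Formula.Kf C d) (Formula.K (Formula.Kf C d)))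
  | kf5 (C : Finset Q) (d : Q) :
      SLKVF (Formula.imp (Formula.not (Formula.Kf C d))
        (Formula.K (Formula.not (Formula.Kf C d))))
  | proj {C : Finset Q} {c : Q} : c ∈ C → SLKVF (Formula.Kf C c)
  | tran (C D : Finset Q) (e : Q) :
      SLKVF (Formula.imp (Formula.and (finConjKf P Q C D) (Formula.Kf D e)) (Formula.Kf C e))
  | vf (C : Finset Q) (d : Q) :
      SLKVF (Formula.imp (Formula.and (finConjKv P Q C) (Formula.Kf C d)) (Formula.Kv d))

end Axioms

/-- Provability from an axiom set `Ax` with rules modus ponens and necessitation. -/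
inductive Prov (Ax : Formula P Q → Prop) : Formula P Q → Prop where
  | ax {φ : Formula P Q} : Ax φ → Prov Ax φ
  | mp {φ ψ : Formula P Q} : Prov Ax (Formula.imp φ ψ) → Prov Ax φ → Prov Ax ψ
  | nec {φ : Formula P Q} : Prov Ax φ → Prov Ax (Formula.K φ)

/-- `Γ` is consistent: no finite conjunction of its members proves `⊥`. -/
def Consistent (Ax : Formula P Q → Prop) (Γ : Set (Formula P Q)) : Prop :=
  ¬ ∃ L : List (Formula P Q), (∀ φ ∈ L, φ ∈ Γ) ∧ Prov Ax (Formula.imp (conj L) Formula.bot)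

/-- `Γ` is maximal consistent. -/
def MCS (Ax : Formula P Q → Prop) (Γ : Set (Formula P Q)) : Prop :=
  Consistent Ax Γ ∧ ∀ φ : Formula P Q, φ ∈ Γ ∨ Formula.not φ ∈ Γ

/-! Function domains: sets of finitary functions on the value domain `G`. -/

/-- A function domain on `G`: a set of `n`-ary functions on `G` for various `n`. -/
abbrev FnDom (G : Type) : Type := Set (Σ n : ℕ, (Fin n → G) → G)

/-- `F` contains all projection functions `id_{i,j}` for `0 < i ≤ j`. -/
def hasProjections (F : FnDom G) : Prop :=
  ∀ (j : ℕ) (k : Fin j), (⟨j, fun x => x k⟩ : Σ n : ℕ, (Fin n → G) → G) ∈ F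

/-- `F` is closed under composition: for an `n`-ary `f ∈ F` with `n ≥ 1` and
`m`-ary `g₁, …, gₙ ∈ F`, the composition `f(g₁(·),…,gₙ(·))` is in `F`. -/
def closedComp (F : FnDom G) : Prop :=
  ∀ (n m : ℕ), 0 < n → ∀ f : (Fin n → G) → G,
    (⟨n, f⟩ : Σ n : ℕ, (Fin n → G) → G) ∈ F →
    ∀ g : Fin n → (Fin m → G) → G,
      (∀ k, (⟨m, g k⟩ : Σ n : ℕ, (Fin n → G) → G) ∈ F) →
      (⟨m, fun x => f fun k => g k x⟩ : Σ n : ℕ, (Fin n → G) → G) ∈ F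

/-- The tuple of values of the variables of the finite set `C`, in the fixed
(increasing) order of its elements. -/
def tupleV [LinearOrder Q] (v : Q → G) (C : Finset Q) : Fin C.card → G :=
  fun k => v ((C.sort (· ≤ ·)).get (Fin.cast (Finset.length_sort (s := C) (· ≤ ·)).symm k))

/-- A model of `LKVF`: worlds, an assignment of propositional letters and an
assignment of values to variables. -/
structure Model (P Q G : Type) : Type 1 where
  W : Type
  U : W → P → Prop
  V : W → Q → G

variable [LinearOrder Q]

/-- Truth of a formula at a world of a model, relative to a function domain `F`. -/
def sat (F : FnDom G) (M : Model P Q G) (w : M.W) : Formula P Q → Prop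
  | Formula.top => True
  | Formula.atom p => M.U w p
  | Formula.Kv d => ∃ x : G, ∀ w' : M.W, M.V w' d = x
  | Formula.Kf C d =>
      ∃ f : (Fin C.card → G) → G,
        (⟨C.card, f⟩ : Σ n : ℕ, (Fin n → G) → G) ∈ F ∧
        ∀ w' : M.W, M.V w' d = f (tupleV (M.V w') C)
  | Formula.and φ ψ => sat F M w φ ∧ sat F M w ψ
  | Formula.not φ => ¬ sat F M w φ
  | Formula.K φ => ∀ w' : M.W, sat F M w' φ

/-- Validity over all models built on the value domain `G` and function domain `F`. -/
def Valid (F : FnDom G) (φ : Formula P Q) : Prop :=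
  ∀ (M : Model P Q G) (w : M.W), sat F M w φ

/-! STATEMENT 7: soundness and completeness of `SLKVF + EXT` for the full
function domain, given `|G| ≥ |P_f(Q) × {0,1}|`. -/

/-- The axiom system `SLKVF + EXT`. -/
def AxExt (P Q : Type) [LinearOrder Q] : Formula P Q → Prop := fun φ =>
  SLKVF P Q φ ∨ ∃ (d : Q) (C : Finset Q), φ = Formula.imp (Formula.Kv d) (Formula.Kf C d)

/-!
Soundness is a check of each axiom: over the full function domain, `Kf(C,d)` holds exactly when
the value of `d` is a function of the values of `C` across all worlds, and `Kv(d)` is the case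
`C = ∅`.

Completeness uses a canonical model for a maximal consistent set `Γ₀`. A world is a maximal
consistent `Δ ⊇ {φ | Kφ ∈ Γ₀}` together with an index in `Option (Finset Q)`; at index `some B`
the variable `q` takes a common value if `Kf(B,q) ∈ Γ₀` and a value private to `B` otherwise.
Distinct indices agree only on common values, so by TRAN `d` depends on `C` when
`Kf(C,d) ∈ Γ₀`; conversely, at index `some C` all of `C` is common by PROJ, while `d` is common
only if `Kf(C,d) ∈ Γ₀`. These values fit into `G` because `Option (Finset Q)` embeds into
`Finset Q × Bool`. Finally EXT and VF give `Kv(d) ↔ Kf(∅,d)`, matching the semantics.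
-/

section Calculus

class ExtendsSLKVF (Ax : Formula P Q → Prop) : Prop where
  slkvf : ∀ {φ : Formula P Q}, SLKVF P Q φ → Ax φ

instance : ExtendsSLKVF (AxExt P Q) := ⟨Or.inl⟩

variable {Ax : Formula P Q → Prop} [ExtendsSLKVF Ax] {Γ : Set (Formula P Q)}
  {φ ψ χ : Formula P Q}

namespace Prov

theorem of_slkvf (h : SLKVF P Q φ) : Prov Ax φ := ax (ExtendsSLKVF.slkvf h)

theorem of_isTaut (h : IsTaut φ) : Prov Ax φ := of_slkvf (SLKVF.taut h)

theorem top : Prov Ax (Formula.top : Formula P Q) := of_isTaut fun _ ht _ _ => ht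

theorem taut_mp (h : IsTaut (φ.imp ψ)) (h₁ : Prov Ax φ) : Prov Ax ψ :=
  (of_isTaut h).mp h₁

theorem taut_mp₂ (h : IsTaut (φ.imp (ψ.imp χ))) (h₁ : Prov Ax φ) (h₂ : Prov Ax ψ) :
    Prov Ax χ :=
  ((of_isTaut h).mp h₁).mp h₂

end Prov

def unbox (Γ : Set (Formula P Q)) : Set (Formula P Q) := {φ | φ.K ∈ Γ}

-- Shaped so that `Consistent Ax Γ` unfolds to `¬ Entails Ax Γ Formula.bot`.
variable (Ax) in
def Entails (Γ : Set (Formula P Q)) (φ : Formula P Q) : Prop :=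
  ∃ L : List (Formula P Q), (∀ ψ ∈ L, ψ ∈ Γ) ∧ Prov Ax ((conj L).imp φ)

namespace Entails

theorem of_prov (h : Prov Ax φ) : Entails Ax Γ φ :=
  ⟨[], by simp, Prov.taut_mp (fun _ _ _ _ => by grind [Formula.imp]) h⟩

theorem of_mem (h : φ ∈ Γ) : Entails Ax Γ φ :=
  ⟨[φ], by simpa using h, Prov.of_isTaut fun _ _ _ _ => by grind [Formula.imp, conj]⟩

theorem mp (h₁ : Entails Ax Γ (φ.imp ψ)) (h₂ : Entails Ax Γ φ) : Entails Ax Γ ψ := by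
  obtain ⟨L₁, hL₁, hP₁⟩ := h₁
  obtain ⟨L₂, hL₂, hP₂⟩ := h₂
  refine ⟨L₁ ++ L₂, fun χ hχ => (List.mem_append.1 hχ).elim (hL₁ χ) (hL₂ χ), ?_⟩
  clear hL₁
  induction L₁ generalizing ψ with
  | nil => exact Prov.taut_mp₂ (fun _ _ _ _ => by grind [Formula.imp, conj]) hP₁ hP₂
  | cons α L₁ ih =>
    have := ih (ψ := α.imp ψ) (Prov.taut_mp (fun _ _ _ _ => by grind [Formula.imp, conj]) hP₁)
    exact Prov.taut_mp (fun _ _ _ _ => by grind [Formula.imp, conj]) this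

theorem taut_mp (h : IsTaut (φ.imp ψ)) (h₁ : Entails Ax Γ φ) : Entails Ax Γ ψ :=
  (of_prov (Prov.of_isTaut h)).mp h₁

theorem taut_mp₂ (h : IsTaut (φ.imp (ψ.imp χ))) (h₁ : Entails Ax Γ φ)
    (h₂ : Entails Ax Γ ψ) : Entails Ax Γ χ :=
  ((of_prov (Prov.of_isTaut h)).mp h₁).mp h₂

theorem deduction (h : Entails Ax (insert χ Γ) ψ) : Entails Ax Γ (χ.imp ψ) := by
  obtain ⟨L, hL, hP⟩ := h
  induction L generalizing ψ with
  | nil => exact ⟨[], by simp, Prov.taut_mp (fun _ _ _ _ => by grind [Formula.imp, conj]) hP⟩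
  | cons α L ih =>
    have hα := ih (ψ := α.imp ψ) (fun β hβ => hL β (List.mem_cons_of_mem α hβ))
      (Prov.taut_mp (fun _ _ _ _ => by grind [Formula.imp, conj]) hP)
    rcases hL α List.mem_cons_self with rfl | hαΓ
    · exact hα.taut_mp fun _ _ _ _ => by grind [Formula.imp]
    · exact taut_mp₂ (fun _ _ _ _ => by grind [Formula.imp]) hα (of_mem hαΓ)

theorem box (h : Entails Ax (unbox Γ) ψ) : Entails Ax Γ ψ.K := by
  obtain ⟨L, hL, hP⟩ := h
  induction L generalizing ψ with
  | nil =>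
    exact of_prov (Prov.taut_mp₂ (fun _ _ _ _ => by grind [Formula.imp, conj]) hP Prov.top).nec
  | cons α L ih =>
    have hα := ih (ψ := α.imp ψ) (fun β hβ => hL β (List.mem_cons_of_mem α hβ))
      (Prov.taut_mp (fun _ _ _ _ => by grind [Formula.imp, conj]) hP)
    exact ((of_prov (Prov.of_slkvf (SLKVF.axK α ψ))).mp hα).mp
      (of_mem (hL α List.mem_cons_self))

theorem empty_iff : Entails Ax ∅ φ ↔ Prov Ax φ := by
  refine ⟨fun ⟨L, hL, hP⟩ => ?_, of_prov⟩
  obtain rfl : L = [] := List.eq_nil_iff_forall_not_mem.2 hL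
  exact Prov.taut_mp₂ (fun _ _ _ _ => by grind [Formula.imp, conj]) hP Prov.top

end Entails

theorem consistent_singleton_not (h : ¬ Prov Ax φ) : Consistent Ax {φ.not} := fun hbot => by
  have hrefute : Entails Ax ∅ (φ.not.imp .bot) := Entails.deduction (by rwa [insert_empty_eq])
  exact h (Prov.taut_mp (fun _ _ _ _ => by grind [Formula.imp, Formula.bot])
    (Entails.empty_iff.1 hrefute))

namespace MCS

theorem mem_iff_entails (hΓ : MCS Ax Γ) : φ ∈ Γ ↔ Entails Ax Γ φ := by
  refine ⟨Entails.of_mem, fun h => (hΓ.2 φ).resolve_right fun hnot => hΓ.1 ?_⟩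
  exact Entails.taut_mp₂ (fun _ _ _ _ => by grind [Formula.imp, Formula.bot]) h
    (Entails.of_mem hnot)

theorem mem_of_prov (hΓ : MCS Ax Γ) (h : Prov Ax φ) : φ ∈ Γ :=
  hΓ.mem_iff_entails.2 (Entails.of_prov h)

theorem mem_of_imp (hΓ : MCS Ax Γ) (hφ : φ ∈ Γ) (h : Prov Ax (φ.imp ψ)) : ψ ∈ Γ :=
  hΓ.mem_iff_entails.2 ((Entails.of_prov h).mp (Entails.of_mem hφ))

theorem not_mem_iff (hΓ : MCS Ax Γ) : φ.not ∈ Γ ↔ φ ∉ Γ :=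
  ⟨fun hnot hφ => hΓ.1 (Entails.taut_mp₂ (fun _ _ _ _ => by grind [Formula.imp, Formula.bot])
    (Entails.of_mem hφ) (Entails.of_mem hnot)), (hΓ.2 φ).resolve_left⟩

theorem and_mem_iff (hΓ : MCS Ax Γ) : φ.and ψ ∈ Γ ↔ φ ∈ Γ ∧ ψ ∈ Γ := by
  simp only [hΓ.mem_iff_entails]
  refine ⟨fun h => ⟨h.taut_mp ?_, h.taut_mp ?_⟩, fun h => Entails.taut_mp₂ ?_ h.1 h.2⟩ <;>
    exact fun _ _ _ _ => by grind [Formula.imp]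

theorem conj_mem (hΓ : MCS Ax Γ) {L : List (Formula P Q)} (hL : ∀ φ ∈ L, φ ∈ Γ) :
    conj L ∈ Γ := by
  induction L with
  | nil => exact hΓ.mem_of_prov Prov.top
  | cons φ L ih =>
    exact hΓ.and_mem_iff.2
      ⟨hL φ List.mem_cons_self, ih fun χ hχ => hL χ (List.mem_cons_of_mem φ hχ)⟩

end MCS

theorem Consistent.exists_mcs_superset (hΓ : Consistent Ax Γ) :
    ∃ Δ, MCS Ax Δ ∧ Γ ⊆ Δ := by
  obtain ⟨Δ, hΓΔ, hmax⟩ := zorn_subset_nonempty {Δ | Consistent Ax Δ ∧ Γ ⊆ Δ}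
    (fun c hc hchain ⟨Δ₀, hΔ₀⟩ => by
      refine ⟨⋃₀ c, ⟨?_, (hc hΔ₀).2.trans (Set.subset_sUnion_of_mem hΔ₀)⟩,
        fun _ => Set.subset_sUnion_of_mem⟩
      rintro ⟨L, hL, hP⟩
      obtain ⟨Δ, hΔc, hLΔ⟩ := hchain.directedOn.exists_mem_subset_of_finite_of_subset_sUnion
        ⟨Δ₀, hΔ₀⟩ (List.finite_toSet L) hL
      exact (hc hΔc).1 ⟨L, hLΔ, hP⟩) Γ ⟨hΓ, subset_rfl⟩
  have hcons := hmax.prop.1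
  have hrefute : ∀ χ ∉ Δ, Entails Ax Δ (χ.imp .bot) := fun χ hχ => Entails.deduction <| by
    by_contra hins
    exact hχ (hmax.2 ⟨hins, hΓΔ.trans (Set.subset_insert χ Δ)⟩ (Set.subset_insert χ Δ)
      (Set.mem_insert χ Δ))
  refine ⟨Δ, ⟨hcons, fun φ => ?_⟩, hΓΔ⟩
  by_contra! h
  exact hcons (Entails.taut_mp₂ (fun _ _ _ _ => by grind [Formula.imp, Formula.bot])
    (hrefute φ h.1) (hrefute φ.not h.2))

theorem MCS.K_mem_iff (hΓ : MCS Ax Γ) :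
    ψ.K ∈ Γ ↔ ∀ Δ, MCS Ax Δ → unbox Γ ⊆ Δ → ψ ∈ Δ := by
  refine ⟨fun h Δ _ hΓΔ => hΓΔ h, fun h => by_contra fun hK => ?_⟩
  have hcons : Consistent Ax (insert ψ.not (unbox Γ)) := fun hbot =>
    hK (hΓ.mem_iff_entails.2 (Entails.box
      ((Entails.deduction hbot).taut_mp fun _ _ _ _ => by grind [Formula.imp, Formula.bot])))
  obtain ⟨Δ, hΔ, hsub⟩ := hcons.exists_mcs_superset
  exact hΔ.not_mem_iff.1 (hsub (Set.mem_insert _ _))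
    (h Δ hΔ ((Set.subset_insert _ _).trans hsub))

theorem MCS.mem_iff_of_introspective {Δ : Set (Formula P Q)} (hΓ : MCS Ax Γ) (hΔ : MCS Ax Δ)
    (hΓΔ : unbox Γ ⊆ Δ) (h₄ : Prov Ax (χ.imp χ.K)) (h₅ : Prov Ax (χ.not.imp χ.not.K)) :
    χ ∈ Γ ↔ χ ∈ Δ := by
  refine ⟨fun h => hΓΔ (hΓ.mem_of_imp h h₄), fun h => by_contra fun hχ => ?_⟩
  exact hΔ.not_mem_iff.1 (hΓΔ (hΓ.mem_of_imp (hΓ.not_mem_iff.2 hχ) h₅)) h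

end Calculus

section Semantics

variable {F : FnDom G} {M : Model P Q G} {w : M.W} {φ ψ : Formula P Q}

theorem tupleV_eq_tupleV_iff (v v' : Q → G) (C : Finset Q) :
    tupleV v C = tupleV v' C ↔ ∀ c ∈ C, v c = v' c := by
  refine ⟨fun h c hc => ?_,
    fun h => funext fun k => h _ ((Finset.mem_sort _).1 (List.get_mem _ _))⟩
  obtain ⟨i, rfl⟩ := List.mem_iff_get.1 ((Finset.mem_sort (· ≤ ·)).2 hc)
  exact congrFun h (Fin.cast (Finset.length_sort (s := C) (· ≤ ·)) i)

theorem sat_imp : sat F M w (φ.imp ψ) ↔ (sat F M w φ → sat F M w ψ) := by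
  simp only [Formula.imp, sat]
  tauto

theorem sat_conj {L : List (Formula P Q)} : sat F M w (conj L) ↔ ∀ φ ∈ L, sat F M w φ := by
  induction L with
  | nil => simp [conj, sat]
  | cons φ L ih => simp [conj, sat, ih]

theorem sat_of_isTaut (h : IsTaut φ) : sat F M w φ :=
  of_decide_eq_true (h (fun χ => decide (sat F M w χ)) (decide_eq_true trivial)
    (fun α β => by by_cases sat F M w α <;> by_cases sat F M w β <;> simp [sat, *])
    (fun α => by by_cases sat F M w α <;> simp [sat, *]))

variable [Nonempty G]

theorem sat_univ_Kf_iff {C : Finset Q} {d : Q} :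
    sat Set.univ M w (Formula.Kf C d) ↔
      ∀ w₁ w₂ : M.W, (∀ c ∈ C, M.V w₁ c = M.V w₂ c) → M.V w₁ d = M.V w₂ d := by
  refine ⟨fun ⟨f, _, hf⟩ w₁ w₂ hC => ?_, fun h => ?_⟩
  · rw [hf w₁, hf w₂, (tupleV_eq_tupleV_iff _ _ C).2 hC]
  · have hfac : Function.FactorsThrough (fun w' => M.V w' d) (fun w' => tupleV (M.V w') C) :=
      fun w₁ w₂ hC => h w₁ w₂ ((tupleV_eq_tupleV_iff _ _ C).1 hC)
    exact ⟨_, Set.mem_univ _,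
      fun w' => (hfac.extend_apply (fun _ => Classical.arbitrary G) w').symm⟩

theorem sat_univ_Kv_iff_Kf_empty {d : Q} :
    sat Set.univ M w (Formula.Kv d) ↔ sat Set.univ M w (Formula.Kf ∅ d) := by
  rw [sat_univ_Kf_iff]
  exact ⟨fun ⟨x, hx⟩ w₁ w₂ _ => (hx w₁).trans (hx w₂).symm,
    fun h => ⟨M.V w d, fun w' => h w' w (by simp)⟩⟩

theorem valid_of_SLKVF (h : SLKVF P Q φ) : Valid (Set.univ : FnDom G) φ := fun M w => by
  cases h with
  | taut h => exact sat_of_isTaut h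
  | axK φ ψ => simp only [sat_imp]; exact fun h₁ h₂ w' => sat_imp.1 (h₁ w') (h₂ w')
  | axT φ => exact sat_imp.2 fun h => h w
  | ax4 φ | ax5 φ | kv4 d | kv5 d | kf4 C d | kf5 C d => exact sat_imp.2 fun h _ => h
  | proj hc => exact sat_univ_Kf_iff.2 fun _ _ hC => hC _ hc
  | tran C D e =>
    refine sat_imp.2 fun ⟨hCD, hDe⟩ => sat_univ_Kf_iff.2 fun w₁ w₂ hC => ?_
    simp only [finConjKf, sat_conj, List.mem_map, Finset.mem_sort] at hCD
    exact sat_univ_Kf_iff.1 hDe w₁ w₂ fun d hd =>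
      sat_univ_Kf_iff.1 (hCD _ ⟨d, hd, rfl⟩) w₁ w₂ hC
  | vf C d =>
    refine sat_imp.2 fun ⟨hC, hCd⟩ => sat_univ_Kv_iff_Kf_empty.2 (sat_univ_Kf_iff.2 ?_)
    simp only [finConjKv, sat_conj, List.mem_map, Finset.mem_sort] at hC
    refine fun w₁ w₂ _ => sat_univ_Kf_iff.1 hCd w₁ w₂ fun c hc => ?_
    exact sat_univ_Kf_iff.1 (sat_univ_Kv_iff_Kf_empty.1 (hC _ ⟨c, hc, rfl⟩)) w₁ w₂ (by simp)

theorem Prov.valid (h : Prov (AxExt P Q) φ) : Valid (Set.univ : FnDom G) φ := by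
  induction h with
  | ax h =>
    obtain h | ⟨d, C, rfl⟩ := h
    · exact valid_of_SLKVF h
    · intro M w
      simp only [sat_imp, sat_univ_Kv_iff_Kf_empty, sat_univ_Kf_iff]
      exact fun hd w₁ w₂ _ => hd w₁ w₂ (by simp)
  | mp _ _ ih₁ ih₂ => exact fun M w => sat_imp.1 (ih₁ M w) (ih₂ M w)
  | nec _ ih => exact fun M _ w' => ih M w'

end Semantics

section Canonical

variable {Ax : Formula P Q → Prop} [ExtendsSLKVF Ax] {Γ₀ : Set (Formula P Q)}
  {C D : Finset Q} {c d : Q}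

theorem MCS.Kf_mem_of_mem (hΓ₀ : MCS Ax Γ₀) (hc : c ∈ C) : Formula.Kf C c ∈ Γ₀ :=
  hΓ₀.mem_of_prov (Prov.of_slkvf (SLKVF.proj hc))

theorem MCS.Kf_trans (hΓ₀ : MCS Ax Γ₀) (hCD : ∀ x ∈ D, Formula.Kf C x ∈ Γ₀)
    (hDd : Formula.Kf D d ∈ Γ₀) : Formula.Kf C d ∈ Γ₀ := by
  have hconj : finConjKf P Q C D ∈ Γ₀ := hΓ₀.conj_mem (by simpa [finConjKf] using hCD)
  exact hΓ₀.mem_of_imp (hΓ₀.and_mem_iff.2 ⟨hconj, hDd⟩) (Prov.of_slkvf (SLKVF.tran C D d))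

theorem MCS.Kv_mem_iff_Kf_empty {Γ : Set (Formula P Q)} (hΓ : MCS (AxExt P Q) Γ) :
    Formula.Kv d ∈ Γ ↔ Formula.Kf ∅ d ∈ Γ := by
  refine ⟨fun h => hΓ.mem_of_imp h (Prov.ax (Or.inr ⟨d, ∅, rfl⟩)), fun h => ?_⟩
  have hempty : finConjKv P Q (∅ : Finset Q) ∈ Γ := hΓ.conj_mem (by simp)
  exact hΓ.mem_of_imp (hΓ.and_mem_iff.2 ⟨hempty, h⟩) (Prov.of_slkvf (SLKVF.vf ∅ d))

noncomputable def canonVal (Γ₀ : Set (Formula P Q)) :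
    Option (Finset Q) → Q → Option (Finset Q)
  | none, _ => none
  | some B, q => if Formula.Kf B q ∈ Γ₀ then none else some B

theorem MCS.canonVal_eq_none (hΓ₀ : MCS Ax Γ₀) {g : Option (Finset Q)}
    (hC : ∀ c ∈ C, canonVal Γ₀ g c = none) (hd : Formula.Kf C d ∈ Γ₀) :
    canonVal Γ₀ g d = none := by
  cases g with
  | none => rfl
  | some B =>
    have hB : ∀ c ∈ C, Formula.Kf B c ∈ Γ₀ := fun c hc => by
      by_contra h
      simpa [canonVal, h] using hC c hc
    simp [canonVal, hΓ₀.Kf_trans hB hd]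

theorem MCS.Kf_mem_iff_canonVal (hΓ₀ : MCS Ax Γ₀) :
    Formula.Kf C d ∈ Γ₀ ↔ ∀ g g' : Option (Finset Q),
      (∀ c ∈ C, canonVal Γ₀ g c = canonVal Γ₀ g' c) → canonVal Γ₀ g d = canonVal Γ₀ g' d := by
  refine ⟨fun hd g g' hC => ?_, fun h => by_contra fun hd => ?_⟩
  · by_cases hgg : g = g'
    · rw [hgg]
    have hsome : ∀ {g : Option (Finset Q)} {q : Q} {B : Finset Q},
        canonVal Γ₀ g q = some B → g = some B := fun {g q B} h => by
      cases g with
      | none => cases h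
      | some B' =>
        simp only [canonVal] at h
        split_ifs at h
        exact h
    -- distinct indices can only agree on the shared value `none`
    have hnone : ∀ c ∈ C, canonVal Γ₀ g c = none ∧ canonVal Γ₀ g' c = none := fun c hc => by
      cases hv : canonVal Γ₀ g c with
      | none => exact ⟨rfl, (hC c hc).symm.trans hv⟩
      | some B =>
        exact absurd ((hsome hv).trans (hsome ((hC c hc).symm.trans hv)).symm) hgg
    rw [hΓ₀.canonVal_eq_none (fun c hc => (hnone c hc).1) hd,
      hΓ₀.canonVal_eq_none (fun c hc => (hnone c hc).2) hd]
  · have := h none (some C) fun c hc => by simp [canonVal, hΓ₀.Kf_mem_of_mem hc]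
    simp [canonVal, hd] at this

variable (Ax) in
noncomputable def canonModel (e : Option (Finset Q) ↪ G) (Γ₀ : Set (Formula P Q)) :
    Model P Q G where
  W := {Δ : Set (Formula P Q) // MCS Ax Δ ∧ unbox Γ₀ ⊆ Δ} × Option (Finset Q)
  U w p := Formula.atom p ∈ w.1.1
  V w q := e (canonVal Γ₀ w.2 q)

theorem sat_canonModel_Kf_iff (hΓ₀ : MCS Ax Γ₀) (e : Option (Finset Q) ↪ G)
    (w : (canonModel Ax e Γ₀).W) :
    sat Set.univ (canonModel Ax e Γ₀) w (Formula.Kf C d) ↔ Formula.Kf C d ∈ w.1.1 := by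
  have : Nonempty G := ⟨e none⟩
  rw [sat_univ_Kf_iff, ← hΓ₀.mem_iff_of_introspective w.1.2.1 w.1.2.2
    (Prov.of_slkvf (SLKVF.kf4 C d)) (Prov.of_slkvf (SLKVF.kf5 C d)), hΓ₀.Kf_mem_iff_canonVal]
  simp only [canonModel, e.apply_eq_iff_eq]
  exact ⟨fun h g g' => h (w.1, g) (w.1, g'), fun h w₁ w₂ => h w₁.2 w₂.2⟩

theorem sat_canonModel_iff (hΓ₀ : MCS (AxExt P Q) Γ₀) (e : Option (Finset Q) ↪ G)
    (φ : Formula P Q) (w : (canonModel (AxExt P Q) e Γ₀).W) :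
    sat Set.univ (canonModel (AxExt P Q) e Γ₀) w φ ↔ φ ∈ w.1.1 := by
  have : Nonempty G := ⟨e none⟩
  induction φ generalizing w with
  | top => exact iff_of_true trivial (w.1.2.1.mem_of_prov Prov.top)
  | atom p => rfl
  | Kv d =>
    rw [sat_univ_Kv_iff_Kf_empty, sat_canonModel_Kf_iff hΓ₀, w.1.2.1.Kv_mem_iff_Kf_empty]
  | Kf C d => exact sat_canonModel_Kf_iff hΓ₀ e w
  | and φ ψ ihφ ihψ => exact (and_congr (ihφ w) (ihψ w)).trans w.1.2.1.and_mem_iff.symm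
  | not φ ih => exact (not_congr (ih w)).trans w.1.2.1.not_mem_iff.symm
  | K φ ih =>
    calc sat Set.univ (canonModel (AxExt P Q) e Γ₀) w φ.K
        ↔ ∀ Δ, MCS (AxExt P Q) Δ → unbox Γ₀ ⊆ Δ → φ ∈ Δ :=
          ⟨fun h Δ hΔ hsub => (ih (⟨Δ, hΔ, hsub⟩, none)).1 (h _),
            fun h w' => (ih w').2 (h _ w'.1.2.1 w'.1.2.2)⟩
      _ ↔ φ.K ∈ Γ₀ := hΓ₀.K_mem_iff.symm
      _ ↔ φ.K ∈ w.1.1 := hΓ₀.mem_iff_of_introspective w.1.2.1 w.1.2.2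
          (Prov.of_slkvf (SLKVF.ax4 φ)) (Prov.of_slkvf (SLKVF.ax5 φ))

theorem Prov.of_valid (e : Option (Finset Q) ↪ G) {φ : Formula P Q}
    (h : Valid (Set.univ : FnDom G) φ) : Prov (AxExt P Q) φ := by
  by_contra hφ
  obtain ⟨Γ₀, hΓ₀, hsub⟩ := (consistent_singleton_not hφ).exists_mcs_superset
  have hT : unbox Γ₀ ⊆ Γ₀ := fun χ hχ => hΓ₀.mem_of_imp hχ (Prov.of_slkvf (SLKVF.axT χ))
  exact (sat_canonModel_iff hΓ₀ e φ.not (⟨Γ₀, hΓ₀, hT⟩, none)).2 (hsub rfl) (h _ _)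

end Canonical

theorem statement7_general (P Q G : Type) [LinearOrder Q]
    (hcard : Nonempty ((Finset Q × Bool) ↪ G)) :
    ∀ φ : Formula P Q, Prov (AxExt P Q) φ ↔ Valid (Set.univ : FnDom G) φ := by
  obtain ⟨e⟩ := hcard
  have : Nonempty G := ⟨e (∅, true)⟩
  let e' : Option (Finset Q) ↪ G :=
    ((Function.Embedding.sectL (Finset Q) false).trans e).optionElim (e (∅, true)) (by simp)
  exact fun φ => ⟨Prov.valid, Prov.of_valid e'⟩

theorem statement7 (P Q G : Type) [Countable P] [Infinite P] [LinearOrder Q]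
    (hcard : Nonempty ((Finset Q × Bool) ↪ G)) :
    ∀ φ : Formula P Q, Prov (AxExt P Q) φ ↔ Valid (Set.univ : FnDom G) φ :=
  statement7_general P Q G hcard
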